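/- Consider the combinatorial neural code T on the 14 neurons {1,2,3,4,5,6,a,b,c,d,e,f,g,h} with codewords {1,4,a}, {1,5,a,b}, {1,6,b,g}, {2,5,c}, {2,4,c,d}, {2,6,d,g,h}, {3,4,e}, {3,5,e,f}, {3,6,f,h}, {1,a}, {1,b}, {2,c}, {2,d}, {3,e}, {3,f}, {6,g}, {6,h}, {4}, {5}, ∅. Then T is neither open convex nor closed convex: for every d ≥ 1 there is no family of convex open sets in ℝ^d realizing T, and no family of convex closed sets in ℝ^d realizing T. -/

import Mathlib

/-- The atom of a subset `σ` of neurons with respect to a family of sets `U`: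
`A_σ = (⋂_{i ∈ σ} U_i) \ (⋃_{j ∉ σ} U_j)`. -/
def atomOf {n : ℕ} {X : Type*} (U : Fin n → Set X) (σ : Set (Fin n)) : Set X :=
  (⋂ i ∈ σ, U i) \ (⋃ j ∈ σᶜ, U j)

/-- The combinatorial code of a family of sets: the collection of subsets with
nonempty atom. -/
def codeOf {n : ℕ} {X : Type*} (U : Fin n → Set X) : Set (Set (Fin n)) :=
  {σ | (atomOf U σ).Nonempty}

/-- The code `T` on 14 neurons `{1,…,6, a, b, …, h}`, with neurons `1,…,6` encoded as
`0,…,5 : Fin 14` and `a, b, c, d, e, f, g, h` encoded as `6, 7, …, 13 : Fin 14`. -/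
def codeT : Set (Set (Fin 14)) :=
  {{0, 3, 6},           -- 14a
   {0, 4, 6, 7},        -- 15ab
   {0, 5, 7, 12},       -- 16bg
   {1, 4, 8},           -- 25c
   {1, 3, 8, 9},        -- 24cd
   {1, 5, 9, 12, 13},   -- 26dgh
   {2, 3, 10},          -- 34e
   {2, 4, 10, 11},      -- 35ef
   {2, 5, 11, 13},      -- 36fh
   {0, 6},              -- 1a
   {0, 7},              -- 1b
   {1, 8},              -- 2c
   {1, 9},              -- 2d
   {2, 10},             -- 3e
   {2, 11},             -- 3f
   {5, 12},             -- 6g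
   {5, 13},             -- 6h
   {3},                 -- 4
   {4},                 -- 5
   ∅}

/-!
Pick points `p ∈ A_{14a}`, `r ∈ A_{16bg}`, `v ∈ A_{34e}`, `x ∈ A_{36fh}` and `s ∈ A_{25c}`.
The segment `[p, r]` lies in `U₁`, hence in `U_a ∪ U_b`; being connected, with both sets open or
both closed, it meets `U_a ∩ U_b ⊆ U₅` at some `z₁`. In the same way `[v, x] ⊆ U₃` meets
`U_e ∩ U_f ⊆ U₅` at `z₃`, `[r, x] ⊆ U₆` meets `U_g ∩ U_h ⊆ U₂ ∩ U_d` at `z₄`, and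
`[s, z₄] ⊆ U₂` meets `U_c ∩ U_d ⊆ U₄` at `w`. Thus the triangle `p v w` lies in `U₄` and the
triangle `z₁ z₃ s` in `U₅`, which are disjoint. But a hyperplane separating the two triangles
would put `r` and `x`, hence `z₄` and then `w`, on the side of `z₁ z₃ s`.
-/

open Set Convex

section Code

variable {n : ℕ} {X : Type*}

lemma setOf_mem_mem_codeOf (U : Fin n → Set X) (y : X) : {i | y ∈ U i} ∈ codeOf U :=
  ⟨y, mem_iInter₂.mpr fun _ hi => hi, by simp⟩

lemma exists_forall_mem_of_mem_codeOf {U : Fin n → Set X} {σ : Set (Fin n)}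
    (h : σ ∈ codeOf U) : ∃ y, ∀ i ∈ σ, y ∈ U i :=
  let ⟨y, hy, _⟩ := h
  ⟨y, mem_iInter₂.mp hy⟩

end Code

section Segment

variable {E : Type*} [AddCommGroup E] [Module ℝ E] [TopologicalSpace E] [IsTopologicalAddGroup E]
  [ContinuousSMul ℝ E]

lemma exists_mem_segment_inter_of_subset_union {C D : Set E}
    (hCD : (IsOpen C ∧ IsOpen D) ∨ (IsClosed C ∧ IsClosed D)) {x y : E} (hx : x ∈ C) (hy : y ∈ D)
    (hsub : [x -[ℝ] y] ⊆ C ∪ D) : ∃ z ∈ [x -[ℝ] y], z ∈ C ∧ z ∈ D := by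
  have hpre : IsPreconnected [x -[ℝ] y] := (convex_segment x y).isPreconnected
  have hxC : ([x -[ℝ] y] ∩ C).Nonempty := ⟨x, left_mem_segment ℝ x y, hx⟩
  have hyD : ([x -[ℝ] y] ∩ D).Nonempty := ⟨y, right_mem_segment ℝ x y, hy⟩
  rcases hCD with ⟨hC, hD⟩ | ⟨hC, hD⟩
  · exact hpre C D hC hD hsub hxC hyD
  · exact isPreconnected_closed_iff.mp hpre C D hC hD hsub hxC hyD

lemma exists_mem_segment_of_forall_mem_codeOf {n : ℕ} {U : Fin n → Set E}
    (htop : (∀ i, IsOpen (U i)) ∨ (∀ i, IsClosed (U i))) {k i j : Fin n} (hk : Convex ℝ (U k))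
    (hcover : ∀ σ ∈ codeOf U, k ∈ σ → i ∈ σ ∨ j ∈ σ) {x y : E} (hxk : x ∈ U k) (hxi : x ∈ U i)
    (hyk : y ∈ U k) (hyj : y ∈ U j) : ∃ z ∈ [x -[ℝ] y], z ∈ U i ∧ z ∈ U j :=
  exists_mem_segment_inter_of_subset_union (htop.imp (fun h => ⟨h i, h j⟩) fun h => ⟨h i, h j⟩)
    hxi hyj fun z hz => hcover _ (setOf_mem_mem_codeOf U z) (hk.segment_subset hxk hyk hz)

end Segment

section HalfSpace

variable {E : Type*} [AddCommGroup E] [Module ℝ E]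

lemma lt_apply_of_mem_segment {f : E → ℝ} (hf : IsLinearMap ℝ f) {c : ℝ} {x y z : E}
    (hz : z ∈ [x -[ℝ] y]) (hx : c < f x) (hy : c < f y) : c < f z :=
  (convex_halfSpace_gt hf c).segment_subset hx hy hz

lemma lt_apply_right_of_mem_segment {f : E → ℝ} (hf : IsLinearMap ℝ f) {c : ℝ} {x y z : E}
    (hz : z ∈ [x -[ℝ] y]) (hx : f x ≤ c) (hzc : c < f z) : c < f y := by
  by_contra! hy
  exact hzc.not_ge ((convex_halfSpace_le hf c).segment_subset hx hy hz)

variable [TopologicalSpace E] [IsTopologicalAddGroup E] [ContinuousSMul ℝ E]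
  [LocallyConvexSpace ℝ E] [T2Space E]

lemma not_disjoint_convexHull_of_mem_segment {p v w s r x z₁ z₃ z₄ : E}
    (h₁ : z₁ ∈ [p -[ℝ] r]) (h₃ : z₃ ∈ [v -[ℝ] x]) (h₄ : z₄ ∈ [r -[ℝ] x])
    (hw : w ∈ [s -[ℝ] z₄]) : ¬Disjoint (convexHull ℝ {p, v, w}) (convexHull ℝ {z₁, z₃, s}) := by
  intro hdisj
  obtain ⟨f, c, c', hlt, hcc', hgt⟩ := geometric_hahn_banach_compact_closed
    (convex_convexHull ℝ _) ((toFinite _).isCompact_convexHull ℝ)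
    (convex_convexHull ℝ _) ((toFinite _).isClosed_convexHull ℝ) hdisj
  have hf : IsLinearMap ℝ f := f.toLinearMap.isLinear
  have below : ∀ y ∈ ({p, v, w} : Set E), f y < c := fun y hy => hlt y (subset_convexHull ℝ _ hy)
  have above : ∀ y ∈ ({z₁, z₃, s} : Set E), c < f y :=
    fun y hy => hcc'.trans (hgt y (subset_convexHull ℝ _ hy))
  have hr := lt_apply_right_of_mem_segment hf h₁ (below p (by simp)).le (above z₁ (by simp))
  have hx := lt_apply_right_of_mem_segment hf h₃ (below v (by simp)).le (above z₃ (by simp))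
  have hz₄ := lt_apply_of_mem_segment hf h₄ hr hx
  exact (below w (by simp)).not_gt (lt_apply_of_mem_segment hf hw (above s (by simp)) hz₄)

end HalfSpace

theorem codeOf_ne_codeT {E : Type*} [AddCommGroup E] [Module ℝ E] [TopologicalSpace E]
    [IsTopologicalAddGroup E] [ContinuousSMul ℝ E] [LocallyConvexSpace ℝ E] [T2Space E]
    {U : Fin 14 → Set E} (hconv : ∀ i, Convex ℝ (U i))
    (htop : (∀ i, IsOpen (U i)) ∨ (∀ i, IsClosed (U i))) : codeOf U ≠ codeT := by
  intro hcode
  have hcw : ∀ y, {i | y ∈ U i} ∈ codeT := hcode ▸ setOf_mem_mem_codeOf U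
  have hpt : ∀ σ ∈ codeT, ∃ y, ∀ i ∈ σ, y ∈ U i :=
    hcode ▸ fun _ => exists_forall_mem_of_mem_codeOf
  have meet : ∀ {k i j : Fin 14}, (∀ σ ∈ codeT, k ∈ σ → i ∈ σ ∨ j ∈ σ) →
      ∀ {x y : E}, x ∈ U k → x ∈ U i → y ∈ U k → y ∈ U j → ∃ z ∈ [x -[ℝ] y], z ∈ U i ∧ z ∈ U j :=
    fun hcover => exists_mem_segment_of_forall_mem_codeOf htop (hconv _) (hcode ▸ hcover)
  obtain ⟨p, hp0, hp3, hp6⟩ : ∃ p, p ∈ U 0 ∧ p ∈ U 3 ∧ p ∈ U 6 := by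
    simpa using hpt {0, 3, 6} (by simp [codeT])
  obtain ⟨r, hr0, hr5, hr7, hr12⟩ : ∃ r, r ∈ U 0 ∧ r ∈ U 5 ∧ r ∈ U 7 ∧ r ∈ U 12 := by
    simpa using hpt {0, 5, 7, 12} (by simp [codeT])
  obtain ⟨v, hv2, hv3, hv10⟩ : ∃ v, v ∈ U 2 ∧ v ∈ U 3 ∧ v ∈ U 10 := by
    simpa using hpt {2, 3, 10} (by simp [codeT])
  obtain ⟨x, hx2, hx5, hx11, hx13⟩ : ∃ x, x ∈ U 2 ∧ x ∈ U 5 ∧ x ∈ U 11 ∧ x ∈ U 13 := by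
    simpa using hpt {2, 5, 11, 13} (by simp [codeT])
  obtain ⟨s, hs1, hs4, hs8⟩ : ∃ s, s ∈ U 1 ∧ s ∈ U 4 ∧ s ∈ U 8 := by
    simpa using hpt {1, 4, 8} (by simp [codeT])
  obtain ⟨z₁, hz₁, hz₁6, hz₁7⟩ := meet (by simp [codeT]) hp0 hp6 hr0 hr7
  obtain ⟨z₃, hz₃, hz₃10, hz₃11⟩ := meet (by simp [codeT]) hv2 hv10 hx2 hx11
  obtain ⟨z₄, hz₄, hz₄12, hz₄13⟩ := meet (by simp [codeT]) hr5 hr12 hx5 hx13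
  obtain ⟨hz₄1, hz₄9⟩ : z₄ ∈ U 1 ∧ z₄ ∈ U 9 :=
    (by simp [codeT] : ∀ σ ∈ codeT, (12 : Fin 14) ∈ σ → 13 ∈ σ → 1 ∈ σ ∧ 9 ∈ σ)
      _ (hcw z₄) hz₄12 hz₄13
  obtain ⟨w, hw, hw8, hw9⟩ := meet (by simp [codeT]) hs1 hs8 hz₄1 hz₄9
  have hw3 : w ∈ U 3 :=
    (by simp [codeT] : ∀ σ ∈ codeT, (8 : Fin 14) ∈ σ → 9 ∈ σ → 3 ∈ σ) _ (hcw w) hw8 hw9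
  have hz₁4 : z₁ ∈ U 4 :=
    (by simp [codeT] : ∀ σ ∈ codeT, (6 : Fin 14) ∈ σ → 7 ∈ σ → 4 ∈ σ) _ (hcw z₁) hz₁6 hz₁7
  have hz₃4 : z₃ ∈ U 4 :=
    (by simp [codeT] : ∀ σ ∈ codeT, (10 : Fin 14) ∈ σ → 11 ∈ σ → 4 ∈ σ) _ (hcw z₃) hz₃10 hz₃11
  obtain ⟨y, hyK, hyL⟩ :=
    not_disjoint_iff.mp (not_disjoint_convexHull_of_mem_segment hz₁ hz₃ hz₄ hw)
  have hy3 : y ∈ U 3 := convexHull_min (by simp [insert_subset_iff, hp3, hv3, hw3]) (hconv 3) hyK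
  have hy4 : y ∈ U 4 := convexHull_min (by simp [insert_subset_iff, hz₁4, hz₃4, hs4]) (hconv 4) hyL
  exact (by simp [codeT] : ∀ σ ∈ codeT, (3 : Fin 14) ∈ σ → 4 ∉ σ) _ (hcw y) hy3 hy4

/-- The code `T` is neither open convex nor closed convex in any dimension `d ≥ 1`. -/
theorem stmt6 : ∀ d : ℕ, 1 ≤ d →
    (¬ ∃ U : Fin 14 → Set (EuclideanSpace ℝ (Fin d)),
        (∀ i, Convex ℝ (U i)) ∧ (∀ i, IsOpen (U i)) ∧ codeOf U = codeT) ∧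
    (¬ ∃ U : Fin 14 → Set (EuclideanSpace ℝ (Fin d)),
        (∀ i, Convex ℝ (U i)) ∧ (∀ i, IsClosed (U i)) ∧ codeOf U = codeT) := fun _ _ =>
  ⟨fun ⟨_, hconv, hopen, hcode⟩ => codeOf_ne_codeT hconv (.inl hopen) hcode,
    fun ⟨_, hconv, hclosed, hcode⟩ => codeOf_ne_codeT hconv (.inr hclosed) hcode⟩
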